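/- Let p be a prime and let σ_j = Σ_{i=0}^{j} p^i. Let n ≥ 1 and suppose n = Σ_{j=0}^{k} b_j σ_j where the b_j are integers with 0 ≤ b_j ≤ p for all j, and whenever b_j = p one has b_i = 0 for all i < j. Then λ_p(n) = Σ_{j=0}^{k} b_j p^j. -/

import Mathlib

/-- The row space of a matrix over `ZMod p`: all linear combinations of its rows. -/
def rowSpace {p m n : ℕ} (M : Matrix (Fin m) (Fin n) (ZMod p)) :
    Submodule (ZMod p) (Fin n → ZMod p) :=
  Submodule.span (ZMod p) {v | ∃ i, v = M i}

/-- The capacity of a matrix: the maximal Hamming weight of a vector in its row space. -/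
noncomputable def capacity {p m n : ℕ} (M : Matrix (Fin m) (Fin n) (ZMod p)) : ℕ :=
  sSup (hammingNorm '' (rowSpace M : Set (Fin n → ZMod p)))

/-- `lambdaP p n` is the minimum capacity over all matrices over `𝔽_p`
with `n` columns, none of which is a zero column.  (For `n = 0` this gives `0`.) -/
noncomputable def lambdaP (p n : ℕ) : ℕ :=
  sInf {c | ∃ (m : ℕ) (M : Matrix (Fin m) (Fin n) (ZMod p)),
    (∀ j, ∃ i, M i j ≠ 0) ∧ c = capacity M}

/-- `sigmaP p k = 1 + p + ⋯ + p^k`. -/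
def sigmaP (p k : ℕ) : ℕ := ∑ j ∈ Finset.range (k + 1), p ^ j


/-!
Let `N(t) = ∑_{i ≥ 0} ⌊t / p^i⌋`. If `v` is a word of maximal weight `w` in a code of length `n`
with no zero coordinate, averaging the weights of `u + c • v` over the `q` scalars `c` shows
that every codeword has at most `w / q` nonzero entries on the zeros of `v`. Puncturing the code
to those `n - w` coordinates and inducting gives `n ≤ w + N(⌊w / q⌋) = N(w)`, so
`n ≤ N(λ_p(n))`. For `T = ∑ b_j p^j` the conditions on the `b_j` give `N(T - 1) < n`, hence
`λ_p(n) ≥ T`. Conversely the simplex code with `σ_j` columns has all nonzero weights equal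
to `p^j`, and the direct sum of `b_j` copies of it for each `j` has `n` columns and capacity at
most `T`.
-/

open Finset Matrix

/-- `sumDivPow p t = ∑_{i ≥ 0} ⌊t / p^i⌋`: for `p ≥ 2` the terms with `i > t` vanish. -/
def sumDivPow (p t : ℕ) : ℕ := ∑ i ∈ range (t + 1), t / p ^ i

section Arithmetic

variable {p : ℕ}

lemma sumDivPow_eq_sum_range (hp : 2 ≤ p) {t m : ℕ} (hm : t < m) :
    sumDivPow p t = ∑ i ∈ range m, t / p ^ i := by
  refine sum_subset (range_subset_range.2 hm) fun i _ hi => Nat.div_eq_of_lt ?_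
  calc t < i := by simpa using hi
    _ < 2 ^ i := Nat.lt_two_pow_self
    _ ≤ p ^ i := Nat.pow_le_pow_left hp i

lemma sumDivPow_monotone (p : ℕ) : Monotone (sumDivPow p) := fun s t hst =>
  calc sumDivPow p s ≤ ∑ i ∈ range (s + 1), t / p ^ i :=
        sum_le_sum fun i _ => Nat.div_le_div_right hst
    _ ≤ sumDivPow p t := sum_le_sum_of_subset (range_subset_range.2 (by omega))

lemma sumDivPow_eq_add_sumDivPow_div (hp : 2 ≤ p) (t : ℕ) :
    sumDivPow p t = t + sumDivPow p (t / p) := by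
  rcases Nat.eq_zero_or_pos t with rfl | ht
  · simp [sumDivPow]
  rw [sumDivPow, sum_range_succ', sumDivPow_eq_sum_range hp (Nat.div_lt_self ht hp)]
  simp [pow_succ', Nat.div_div_eq_div_mul, add_comm]

lemma sigmaP_zero : sigmaP p 0 = 1 := by simp [sigmaP]

lemma sigmaP_succ (j : ℕ) : sigmaP p (j + 1) = p ^ (j + 1) + sigmaP p j := by
  rw [sigmaP, sum_range_succ, add_comm, sigmaP]

lemma sigmaP_succ' (j : ℕ) : sigmaP p (j + 1) = p * sigmaP p j + 1 := by
  rw [sigmaP, sum_range_succ', sigmaP, mul_sum]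
  simp [pow_succ']

lemma pow_le_sigmaP (j : ℕ) : p ^ j ≤ sigmaP p j :=
  single_le_sum (fun _ _ => Nat.zero_le _) (self_mem_range_succ j)

lemma sub_one_mul_sigmaP_add_one (hp : 1 ≤ p) (j : ℕ) :
    (p - 1) * sigmaP p j + 1 = p ^ (j + 1) := by
  induction j with
  | zero => simp [sigmaP_zero]; omega
  | succ j ih =>
    obtain ⟨r, rfl⟩ : ∃ r, p = r + 1 := ⟨p - 1, by omega⟩
    rw [sigmaP_succ', pow_succ, ← ih]
    simp only [Nat.add_sub_cancel]
    ring

lemma sum_range_succ_mul_pow (f : ℕ → ℕ) (K : ℕ) :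
    ∑ j ∈ range (K + 1), f j * p ^ j = f 0 + p * ∑ j ∈ range K, f (j + 1) * p ^ j := by
  rw [sum_range_succ', mul_sum, add_comm, pow_zero, mul_one]
  exact congrArg _ (sum_congr rfl fun j _ => by ring)

lemma sum_range_succ_mul_sigmaP (f : ℕ → ℕ) (K : ℕ) :
    ∑ j ∈ range (K + 1), f j * sigmaP p j =
      ∑ j ∈ range (K + 1), f j * p ^ j + ∑ j ∈ range K, f (j + 1) * sigmaP p j := by
  simp only [sum_range_succ' _ K, sigmaP_succ, sigmaP_zero, mul_add, sum_add_distrib, pow_zero]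
  ring

lemma sumDivPow_sum_mul_pow (hp : 2 ≤ p) (K : ℕ) (d : ℕ → ℕ) (hd : ∀ j < K, d j < p) :
    sumDivPow p (∑ j ∈ range K, d j * p ^ j) = ∑ j ∈ range K, d j * sigmaP p j := by
  induction K generalizing d with
  | zero => simp [sumDivPow]
  | succ K ih =>
    have hdiv : (∑ j ∈ range (K + 1), d j * p ^ j) / p = ∑ j ∈ range K, d (j + 1) * p ^ j := by
      rw [sum_range_succ_mul_pow, Nat.add_mul_div_left _ _ (by omega),
        Nat.div_eq_of_lt (hd 0 (by omega)), zero_add]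
    rw [sumDivPow_eq_add_sumDivPow_div hp, hdiv, ih _ fun j hj => hd (j + 1) (by omega),
      sum_range_succ_mul_sigmaP]

lemma sumDivPow_sum_mul_pow_sub_one_lt (hp : 2 ≤ p) (K : ℕ) (b : ℕ → ℕ)
    (hb : ∀ j < K, b j ≤ p) (hbp : ∀ j < K, b j = p → ∀ i < j, b i = 0)
    (hn : 0 < ∑ j ∈ range K, b j * sigmaP p j) :
    sumDivPow p (∑ j ∈ range K, b j * p ^ j - 1) < ∑ j ∈ range K, b j * sigmaP p j := by
  induction K generalizing b with
  | zero => simp at hn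
  | succ K ih =>
    rw [sum_range_succ_mul_sigmaP, sum_range_succ_mul_pow] at hn ⊢
    set T := ∑ j ∈ range K, b (j + 1) * p ^ j
    set n := ∑ j ∈ range K, b (j + 1) * sigmaP p j
    rw [sumDivPow_eq_add_sumDivPow_div hp]
    rcases Nat.eq_zero_or_pos (b 0) with h0 | h0
    · have hTn : T ≤ n := sum_le_sum fun j _ => Nat.mul_le_mul_left _ (pow_le_sigmaP j)
      have hdiv : (b 0 + p * T - 1) / p = T - 1 := by
        rcases Nat.eq_zero_or_pos T with hT | hT
        · simp [h0, hT]
        · have h1 : p * (T - 1) = p * T - p := Nat.mul_sub_one p T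
          have h2 : p ≤ p * T := Nat.le_mul_of_pos_right p hT
          rw [show b 0 + p * T - 1 = p - 1 + p * (T - 1) by omega,
            Nat.add_mul_div_left _ _ (by omega), Nat.div_eq_of_lt (by omega), zero_add]
      have hn' : 0 < n := Nat.pos_of_ne_zero fun h => by simp [h0, h, show T = 0 by omega] at hn
      have hrec : sumDivPow p (T - 1) < n := ih (fun j => b (j + 1)) (fun j hj => hb _ (by omega))
        (fun j hj hj' i hi => hbp (j + 1) (by omega) hj' (i + 1) (by omega)) hn'
      rw [hdiv]
      omega
    · -- `hbp` forces the later coefficients to be base-`p` digits, which `T - 1` then inherits.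
      have hdig : ∀ j < K, b (j + 1) < p := fun j hj =>
        (hb _ (by omega)).lt_of_ne fun h => h0.ne' (hbp (j + 1) (by omega) h 0 (by omega))
      have hdiv : (b 0 + p * T - 1) / p = T := by
        rw [show b 0 + p * T - 1 = b 0 - 1 + p * T by omega, Nat.add_mul_div_left _ _ (by omega),
          Nat.div_eq_of_lt (by have := hb 0 (by omega); omega), zero_add]
      rw [hdiv, sumDivPow_sum_mul_pow hp K _ hdig]
      omega

end Arithmetic

section Hamming

variable {ι κ β : Type*} [Fintype ι] [Fintype κ] [Zero β] [DecidableEq β]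

lemma hammingNorm_eq_sum (x : ι → β) : hammingNorm x = ∑ i, if x i ≠ 0 then 1 else 0 :=
  card_filter _ _

lemma hammingNorm_comp_equiv (e : κ ≃ ι) (x : ι → β) : hammingNorm (x ∘ e) = hammingNorm x := by
  simp only [hammingNorm_eq_sum, Function.comp_apply]
  exact e.sum_comp fun i => if x i ≠ 0 then 1 else 0

lemma hammingNorm_sumElim (x : ι → β) (y : κ → β) :
    hammingNorm (Sum.elim x y) = hammingNorm x + hammingNorm y := by
  simp only [hammingNorm_eq_sum, Fintype.sum_sum_type, Sum.elim_inl, Sum.elim_inr]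
  rfl

lemma hammingNorm_prod (x : ι × κ → β) : hammingNorm x = ∑ i, hammingNorm fun j => x (i, j) := by
  simp [hammingNorm_eq_sum, Fintype.sum_prod_type]

lemma hammingNorm_comp_subtype_val (P : ι → Prop) [DecidablePred P] (u : ι → β) :
    hammingNorm (u ∘ Subtype.val : {i // P i} → β) = #{i | P i ∧ u i ≠ 0} := by
  rw [hammingNorm_eq_sum, ← filter_filter, card_filter]
  exact (sum_subtype _ (by simp) fun i => if u i ≠ 0 then 1 else 0).symm

end Hamming

section Codes

variable {F ι : Type*} [Field F] [Fintype F] [DecidableEq F] [Fintype ι]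

local notation "q" => Fintype.card F

lemma card_add_mul_ne_zero {y : F} (hy : y ≠ 0) (x : F) : #{c | x + c * y ≠ 0} = q - 1 := by
  have : ∀ c, x + c * y ≠ 0 ↔ c ≠ -x / y := fun c => by
    rw [not_iff_not, eq_div_iff hy]
    constructor <;> intro h <;> linear_combination h
  simp_rw [this, filter_ne', card_erase_of_mem (mem_univ _), card_univ]

lemma sum_hammingNorm_add_smul (u v : ι → F) :
    ∑ c : F, hammingNorm (u + c • v) =
      (q - 1) * hammingNorm v + q * #{i | v i = 0 ∧ u i ≠ 0} := by
  simp only [hammingNorm_eq_sum, card_filter, mul_sum, ← sum_add_distrib]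
  rw [sum_comm]
  refine sum_congr rfl fun i _ => ?_
  by_cases hv : v i = 0
  · by_cases hu : u i = 0 <;> simp [hu, hv]
  · simp only [Pi.add_apply, Pi.smul_apply, smul_eq_mul, ← card_filter, hv]
    simp [card_add_mul_ne_zero hv, hv]

lemma card_mul_card_filter_le_hammingNorm {C : Submodule F (ι → F)} {u v : ι → F}
    (hu : u ∈ C) (hv : v ∈ C) (hmax : ∀ x ∈ C, hammingNorm x ≤ hammingNorm v) :
    q * #{i | v i = 0 ∧ u i ≠ 0} ≤ hammingNorm v := by
  have hsum : ∑ c : F, hammingNorm (u + c • v) ≤ q * hammingNorm v := by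
    simpa using sum_le_sum fun c (_ : c ∈ univ) => hmax _ (C.add_mem hu (C.smul_mem c hv))
  rw [sum_hammingNorm_add_smul] at hsum
  have := Nat.sub_one_mul q (hammingNorm v)
  have : hammingNorm v ≤ q * hammingNorm v := Nat.le_mul_of_pos_left _ Fintype.card_pos
  omega

theorem card_le_sumDivPow (C : Submodule F (ι → F)) (hsupp : ∀ i, ∃ x ∈ C, x i ≠ 0) {w : ℕ}
    (hw : ∀ x ∈ C, hammingNorm x ≤ w) : Fintype.card ι ≤ sumDivPow q w := by
  induction h : Fintype.card ι using Nat.strong_induction_on generalizing ι w with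
  | _ n ih =>
    rcases isEmpty_or_nonempty ι with hι | ⟨⟨i₀⟩⟩
    · simp [← h]
    obtain ⟨v, hvC, hvmax⟩ :=
      Set.exists_max_image (C : Set (ι → F)) hammingNorm (Set.toFinite _) ⟨0, C.zero_mem⟩
    have hv : 1 ≤ hammingNorm v := by
      obtain ⟨x, hxC, hx⟩ := hsupp i₀
      exact (hammingNorm_pos_iff.2 fun h => hx (by simp [h])).trans_le (hvmax x hxC)
    have hZ : Fintype.card {i // v i = 0} + hammingNorm v = n := by
      rw [Fintype.card_subtype, ← h, hammingNorm]
      exact card_filter_add_card_filter_not _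
    let C' := C.map (LinearMap.funLeft F F (Subtype.val : {i // v i = 0} → ι))
    have hZle : Fintype.card {i // v i = 0} ≤ sumDivPow q (hammingNorm v / q) := by
      refine ih _ (by omega) C' (fun z => ?_) (fun y hy => ?_) rfl
      · obtain ⟨x, hxC, hx⟩ := hsupp z
        exact ⟨_, ⟨x, hxC, rfl⟩, hx⟩
      · obtain ⟨u, huC, rfl⟩ := hy
        change hammingNorm (u ∘ Subtype.val) ≤ _
        rw [hammingNorm_comp_subtype_val, Nat.le_div_iff_mul_le Fintype.card_pos, mul_comm]
        exact card_mul_card_filter_le_hammingNorm huC hvC hvmax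
    have q2 : 2 ≤ q := Fintype.one_lt_card
    calc n = hammingNorm v + Fintype.card {i // v i = 0} := by omega
      _ ≤ hammingNorm v + sumDivPow q (hammingNorm v / q) := by gcongr
      _ = sumDivPow q (hammingNorm v) := (sumDivPow_eq_add_sumDivPow_div q2 _).symm
      _ ≤ sumDivPow q w := sumDivPow_monotone q (hw v hvC)

end Codes

universe u

section Achievable

variable {F : Type u} [Semiring F] [DecidableEq F]

-- Rows and columns range over arbitrary finite types so that block constructions need no
-- reindexing.
variable (F) in
def Achievable (n t : ℕ) : Prop :=
  ∃ (I J : Type u) (_ : Fintype I) (_ : Fintype J) (M : Matrix I J F),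
    Fintype.card J = n ∧ (∀ j, ∃ i, M i j ≠ 0) ∧ ∀ a, hammingNorm (a ᵥ* M) ≤ t

lemma achievable_zero : Achievable F 0 0 :=
  ⟨PEmpty, PEmpty, inferInstance, inferInstance, 0, rfl, fun j => j.elim, fun _ => by simp⟩

lemma Achievable.add {n₁ t₁ n₂ t₂ : ℕ} (h₁ : Achievable F n₁ t₁) (h₂ : Achievable F n₂ t₂) :
    Achievable F (n₁ + n₂) (t₁ + t₂) := by
  obtain ⟨I₁, J₁, _, _, M₁, hn₁, hM₁, ht₁⟩ := h₁
  obtain ⟨I₂, J₂, _, _, M₂, hn₂, hM₂, ht₂⟩ := h₂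
  refine ⟨I₁ ⊕ I₂, J₁ ⊕ J₂, inferInstance, inferInstance, fromBlocks M₁ 0 0 M₂,
    by simp [hn₁, hn₂], ?_, fun a => ?_⟩
  · rintro (j | j)
    · obtain ⟨i, hi⟩ := hM₁ j
      exact ⟨Sum.inl i, hi⟩
    · obtain ⟨i, hi⟩ := hM₂ j
      exact ⟨Sum.inr i, hi⟩
  · simpa [vecMul_fromBlocks, hammingNorm_sumElim] using add_le_add (ht₁ _) (ht₂ _)

lemma achievable_sum {α : Type*} (s : Finset α) (c n t : α → ℕ)
    (h : ∀ i ∈ s, Achievable F (n i) (t i)) :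
    Achievable F (∑ i ∈ s, c i * n i) (∑ i ∈ s, c i * t i) := by
  let S : AddSubmonoid (ℕ × ℕ) :=
    { carrier := {x | Achievable F x.1 x.2}
      add_mem' := Achievable.add
      zero_mem' := achievable_zero }
  have hsum : (∑ i ∈ s, c i * n i, ∑ i ∈ s, c i * t i) = ∑ i ∈ s, c i • (n i, t i) := by
    ext <;> simp [Prod.fst_sum, Prod.snd_sum]
  change (_, _) ∈ S
  exact hsum ▸ S.sum_mem fun i hi => S.nsmul_mem (h i hi) (c i)

lemma achievable_one [Nontrivial F] : Achievable F 1 1 :=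
  ⟨PUnit, PUnit, inferInstance, inferInstance, 1, rfl, fun _ => ⟨PUnit.unit, one_ne_zero⟩,
    fun _ => hammingNorm_le_card_fintype⟩

end Achievable

section Simplex

variable {F : Type u} [Field F] [Fintype F] [DecidableEq F]

local notation "q" => Fintype.card F

/-- The simplex-code step: put `q` copies of `M` side by side, add the row `(c)_{c ∈ F}` below
them, and one more column `(0, …, 0, 1)`. -/
lemma Achievable.simplex_step {n t : ℕ} (h : Achievable F n t) (hnt : (q - 1) * n + 1 ≤ q * t) :
    Achievable F (q * n + 1) (q * t) := by
  obtain ⟨I, J, _, _, M, hn, hM, ht⟩ := h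
  refine ⟨I ⊕ PUnit, (F × J) ⊕ PUnit, inferInstance, inferInstance,
    fromBlocks (of fun i cj => M i cj.2) 0 (of fun _ cj => cj.1) 1, ?_, ?_, fun a => ?_⟩
  · rw [Fintype.card_sum, Fintype.card_prod, hn, Fintype.card_punit]
  · rintro ((⟨c, j⟩ | _))
    · obtain ⟨i, hi⟩ := hM j
      exact ⟨Sum.inl i, hi⟩
    · exact ⟨Sum.inr PUnit.unit, one_ne_zero⟩
  set g := (a ∘ Sum.inl) ᵥ* M
  set s := a (Sum.inr PUnit.unit)
  have hcol : ∀ c, (fun j => ((a ∘ Sum.inl) ᵥ* of fun i (cj : F × J) => M i cj.2) (c, j) +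
      ((a ∘ Sum.inr) ᵥ* of fun _ (cj : F × J) => cj.1) (c, j)) = g + c • fun _ => s := by
    intro c; ext j; simp [g, s, vecMul, dotProduct, mul_comm]
  rw [vecMul_fromBlocks, hammingNorm_sumElim, hammingNorm_prod]
  simp only [Pi.add_apply, hcol, sum_hammingNorm_add_smul]
  have hlast : (a ∘ Sum.inl) ᵥ* (0 : Matrix I PUnit F) +
      (a ∘ Sum.inr) ᵥ* (1 : Matrix PUnit PUnit F) = fun _ => s := by
    ext; simp [s]
  rw [hlast]
  by_cases hs : s = 0
  · have hzero : ∀ (κ : Type u) [Fintype κ], hammingNorm (fun _ : κ => (0 : F)) = 0 :=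
      fun _ _ => hammingNorm_zero
    simp only [hs, hzero, mul_zero, add_zero, zero_add, true_and]
    exact Nat.mul_le_mul_left _ (ht _)
  · have hconst : hammingNorm (fun _ : J => s) = n := by simp [hammingNorm, hs, hn]
    have hunit : hammingNorm (fun _ : PUnit.{u + 1} => s) ≤ 1 := hammingNorm_le_card_fintype
    simp only [hs, hconst, false_and, filter_false, card_empty]
    omega

lemma achievable_sigmaP_pow (j : ℕ) : Achievable F (sigmaP q j) (q ^ j) := by
  induction j with
  | zero => simpa [sigmaP_zero] using achievable_one
  | succ j ih =>
    rw [sigmaP_succ', pow_succ']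
    exact ih.simplex_step (by rw [sub_one_mul_sigmaP_add_one Fintype.card_pos, pow_succ'])

end Simplex

section Capacity

variable {p m n : ℕ}

lemma mem_rowSpace_iff {M : Matrix (Fin m) (Fin n) (ZMod p)} {x : Fin n → ZMod p} :
    x ∈ rowSpace M ↔ ∃ a, a ᵥ* M = x := by
  rw [rowSpace, show {v | ∃ i, v = M i} = Set.range M.row from
    Set.ext fun _ => exists_congr fun _ => eq_comm, ← range_vecMulLinear]
  rfl

lemma hammingNorm_le_capacity {M : Matrix (Fin m) (Fin n) (ZMod p)} {x : Fin n → ZMod p}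
    (hx : x ∈ rowSpace M) : hammingNorm x ≤ capacity M :=
  le_csSup ⟨n, by rintro _ ⟨v, -, rfl⟩; simpa using hammingNorm_le_card_fintype (x := v)⟩
    ⟨x, hx, rfl⟩

lemma capacity_le {M : Matrix (Fin m) (Fin n) (ZMod p)} {t : ℕ}
    (h : ∀ a, hammingNorm (a ᵥ* M) ≤ t) : capacity M ≤ t := by
  refine csSup_le ⟨0, 0, zero_mem _, hammingNorm_zero⟩ ?_
  rintro _ ⟨x, hx, rfl⟩
  obtain ⟨a, rfl⟩ := mem_rowSpace_iff.1 hx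
  exact h a

lemma le_sumDivPow_capacity [Fact p.Prime] {M : Matrix (Fin m) (Fin n) (ZMod p)}
    (hM : ∀ j, ∃ i, M i j ≠ 0) : n ≤ sumDivPow p (capacity M) := by
  have hsupp : ∀ j, ∃ x ∈ rowSpace M, x j ≠ 0 := fun j =>
    let ⟨i, hi⟩ := hM j
    ⟨M i, Submodule.subset_span ⟨i, rfl⟩, hi⟩
  simpa using card_le_sumDivPow (rowSpace M) hsupp fun x hx => hammingNorm_le_capacity hx

lemma le_sumDivPow_lambdaP [Fact p.Prime] (n : ℕ) : n ≤ sumDivPow p (lambdaP p n) := by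
  obtain ⟨m, M, hM, h⟩ := Nat.sInf_mem (s := {c | ∃ (m : ℕ)
      (M : Matrix (Fin m) (Fin n) (ZMod p)), (∀ j, ∃ i, M i j ≠ 0) ∧ c = capacity M})
    ⟨_, 1, of fun _ _ => 1, fun _ => ⟨0, one_ne_zero⟩, rfl⟩
  rw [lambdaP, h]
  exact le_sumDivPow_capacity hM

lemma lambdaP_le_of_achievable {t : ℕ} (h : Achievable (ZMod p) n t) : lambdaP p n ≤ t := by
  obtain ⟨I, J, _, _, M, hn, hM, ht⟩ := h
  let eI := Fintype.equivFin I
  let eJ := Fintype.equivFinOfCardEq hn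
  have hcols : ∀ j, ∃ i, M.submatrix eI.symm eJ.symm i j ≠ 0 := fun j =>
    let ⟨i, hi⟩ := hM (eJ.symm j)
    ⟨eI i, by simpa using hi⟩
  have hcap : capacity (M.submatrix eI.symm eJ.symm) ≤ t := capacity_le fun a => by
    rw [submatrix_vecMul_equiv, hammingNorm_comp_equiv]
    exact ht _
  exact le_trans (Nat.sInf_le ⟨_, _, hcols, rfl⟩) hcap

end Capacity

theorem statement6 (p : ℕ) (hp : p.Prime) (k n : ℕ) (hn : 1 ≤ n)
    (b : ℕ → ℕ)
    (hb : ∀ j, j ≤ k → b j ≤ p)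
    (hbp : ∀ j, j ≤ k → b j = p → ∀ i, i < j → b i = 0)
    (hnsum : n = ∑ j ∈ Finset.range (k + 1), b j * sigmaP p j) :
    lambdaP p n = ∑ j ∈ Finset.range (k + 1), b j * p ^ j := by
  have : Fact p.Prime := ⟨hp⟩
  apply le_antisymm
  · apply lambdaP_le_of_achievable
    rw [hnsum]
    exact achievable_sum _ b _ _ fun j _ => by simpa using achievable_sigmaP_pow (F := ZMod p) j
  · by_contra! hlt
    have hpred := sumDivPow_sum_mul_pow_sub_one_lt hp.two_le (k + 1) b
      (fun j hj => hb j (by omega)) (fun j hj => hbp j (by omega)) (by omega)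
    have hmono := sumDivPow_monotone p (Nat.le_sub_one_of_lt hlt)
    have := le_sumDivPow_lambdaP (p := p) n
    omega
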